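/- For every smooth compactly supported function f : ℝ^d → ℝ, the quadratic form of the killed generator equals the Dirichlet form of the Langevin diffusion after the ground-state transform: (1/2)∫_{ℝ^d} ‖∇f(y)‖² γ(y) dy + ∫_{ℝ^d} κ̃(y) f(y)² γ(y) dy = (1/2)∫_{ℝ^d} ‖∇((γ/π)·f)(y)‖² (π(y)²/γ(y)) dy. -/

import Mathlib

open MeasureTheory
open scoped BigOperators

/-- Partial derivative of `f` in the `i`-th coordinate direction. -/
noncomputable def pd {d : ℕ} (f : EuclideanSpace ℝ (Fin d) → ℝ) (i : Fin d)
    (y : EuclideanSpace ℝ (Fin d)) : ℝ :=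
  fderiv ℝ f y (EuclideanSpace.single i 1)

/-- Laplacian: sum of second partial derivatives. -/
noncomputable def lap {d : ℕ} (f : EuclideanSpace ℝ (Fin d) → ℝ)
    (y : EuclideanSpace ℝ (Fin d)) : ℝ :=
  ∑ i, pd (pd f i) i y

/-- Euclidean dot product of gradients, `∇f · ∇g`. -/
noncomputable def gdot {d : ℕ} (f g : EuclideanSpace ℝ (Fin d) → ℝ)
    (y : EuclideanSpace ℝ (Fin d)) : ℝ :=
  ∑ i, pd f i y * pd g i y


section Infra

variable {d : ℕ}

local notation "E" => EuclideanSpace ℝ (Fin d)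

lemma pd_congr {f g : E → ℝ} (h : ∀ y, f y = g y) (i : Fin d) (y : E) :
    pd f i y = pd g i y := by
  have : f = g := funext h
  rw [this]

lemma pd_eq_of_hasFDerivAt {f : E → ℝ} {L : E →L[ℝ] ℝ} {y : E}
    (h : HasFDerivAt f L y) (i : Fin d) : pd f i y = L (EuclideanSpace.single i 1) := by
  rw [pd, h.fderiv]

lemma contDiff_pd {f : E → ℝ} (hf : ContDiff ℝ (⊤ : ℕ∞) f) (i : Fin d) :
    ContDiff ℝ (⊤ : ℕ∞) (pd f i) :=
  (hf.fderiv_right ((by simp))).clm_apply contDiff_const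

lemma hasCompactSupport_pd {f : E → ℝ} (hf : HasCompactSupport f) (i : Fin d) :
    HasCompactSupport (pd f i) :=
  hf.fderiv_apply ℝ (EuclideanSpace.single i 1)

lemma pd_eq_zero_of_nmem_tsupport {f : E → ℝ} {z : E} (hz : z ∉ tsupport f) (i : Fin d) :
    pd f i z = 0 := by
  have hev : f =ᶠ[nhds z] (fun _ => (0:ℝ)) := by
    filter_upwards [(isClosed_tsupport f).isOpen_compl.mem_nhds hz] with w hw
    exact image_eq_zero_of_notMem_tsupport hw
  have hfd : fderiv ℝ f z = 0 := by
    rw [Filter.EventuallyEq.fderiv_eq hev, fderiv_const_apply]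
  simp [pd, hfd]

lemma integral_pd_eq_zero {F : E → ℝ} (hF : ContDiff ℝ (⊤ : ℕ∞) F)
    (hFc : HasCompactSupport F) (i : Fin d) : ∫ y, pd F i y = 0 := by
  obtain ⟨C, hC⟩ := ContDiff.lipschitzWith_of_hasCompactSupport hFc hF (by simp)
  obtain ⟨R, hR0, hsub⟩ := hFc.isBounded.subset_ball_lt 0 0
  set b : ContDiffBump (0 : E) := ⟨R, 2*R, hR0, by linarith⟩ with hb
  obtain ⟨D, hD⟩ := ContDiff.lipschitzWith_of_hasCompactSupport b.hasCompactSupport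
    (b.contDiff (n := (⊤ : ℕ∞))) (by simp)
  have key := hC.integral_lineDeriv_mul_eq hD b.hasCompactSupport
    (EuclideanSpace.single i 1) (μ := volume)
  have h1 : ∀ y, lineDeriv ℝ F y (EuclideanSpace.single i 1) * b y = pd F i y := by
    intro y
    by_cases hy : y ∈ Metric.ball (0 : E) R
    · rw [b.one_of_mem_closedBall (Metric.ball_subset_closedBall hy), mul_one,
        (hF.differentiable (by simp) y).lineDeriv_eq_fderiv]
      rfl
    · have hy' : y ∉ tsupport F := fun h => hy (hsub h)
      rw [(hF.differentiable (by simp) y).lineDeriv_eq_fderiv,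
        pd_eq_zero_of_nmem_tsupport hy' i]
      have hev : F =ᶠ[nhds y] (fun _ => (0:ℝ)) := by
        filter_upwards [(isClosed_tsupport F).isOpen_compl.mem_nhds hy'] with z hz
        exact image_eq_zero_of_notMem_tsupport hz
      have hfd : fderiv ℝ F y = 0 := by
        rw [Filter.EventuallyEq.fderiv_eq hev, fderiv_const_apply]
      simp [hfd]
  have h2 : ∀ y, lineDeriv ℝ (b : E → ℝ) y (-(EuclideanSpace.single i 1)) * F y = 0 := by
    intro y
    by_cases hy : F y = 0
    · rw [hy, mul_zero]
    · have hy' : y ∈ Metric.ball (0 : E) R :=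
        hsub (subset_tsupport _ (by simpa [Function.mem_support] using hy))
      have hev : (b : E → ℝ) =ᶠ[nhds y] (fun _ => (1:ℝ)) := by
        filter_upwards [Metric.isOpen_ball.mem_nhds hy'] with z hz
        exact b.one_of_mem_closedBall (Metric.ball_subset_closedBall hz)
      have hfd : fderiv ℝ (b : E → ℝ) y = 0 := by
        rw [Filter.EventuallyEq.fderiv_eq hev, fderiv_const_apply]
      rw [((b.contDiff (n := (⊤:ℕ∞))).differentiable (by simp) y).lineDeriv_eq_fderiv,
        hfd]
      simp
  calc ∫ y, pd F i y
      = ∫ y, lineDeriv ℝ F y (EuclideanSpace.single i 1) * b y := by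
        congr 1; exact funext fun y => (h1 y).symm
    _ = ∫ y, lineDeriv ℝ (b : E → ℝ) y (-(EuclideanSpace.single i 1)) * F y := key
    _ = 0 := by simp [h2]

end Infra

theorem stmt_3 (d : ℕ) (hd : 1 ≤ d)
    (A π : EuclideanSpace ℝ (Fin d) → ℝ)
    (hA : ContDiff ℝ (⊤ : ℕ∞) A) (hπ : ContDiff ℝ (⊤ : ℕ∞) π) (hπpos : ∀ y, 0 < π y)
    (γ : EuclideanSpace ℝ (Fin d) → ℝ)
    (hγ : ∀ y, γ y = Real.exp (2 * A y))
    (κt : EuclideanSpace ℝ (Fin d) → ℝ)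
    (hκt : ∀ y, κt y =
      (1/2) * (lap π y / π y - 2 * gdot A π y / π y - 2 * lap A y))
    (f : EuclideanSpace ℝ (Fin d) → ℝ)
    (hf : ContDiff ℝ (⊤ : ℕ∞) f) (hfc : HasCompactSupport f) :
    (1/2) * (∫ y, gdot f f y * γ y)
        + ∫ y, κt y * (f y)^2 * γ y =
      (1/2) * ∫ y, gdot (fun z => (γ z / π z) * f z)
          (fun z => (γ z / π z) * f z) y * ((π y)^2 / γ y) := by
  have hγfun : γ = fun z => Real.exp (2 * A z) := funext hγ
  subst hγfun
  set G : EuclideanSpace ℝ (Fin d) → ℝ := fun z => Real.exp (2 * A z) with hGdef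
  have hπne : ∀ y, π y ≠ 0 := fun y => (hπpos y).ne'
  have hGne : ∀ y, G y ≠ 0 := fun y => (Real.exp_pos _).ne'
  have hGs : ContDiff ℝ (⊤ : ℕ∞) G := Real.contDiff_exp.comp (contDiff_const.mul hA)
  -- pointwise derivative facts
  have hAy : ∀ y, HasFDerivAt A (fderiv ℝ A y) y :=
    fun y => (hA.differentiable (by simp) y).hasFDerivAt
  have hπy : ∀ y, HasFDerivAt π (fderiv ℝ π y) y :=
    fun y => (hπ.differentiable (by simp) y).hasFDerivAt
  have hfy : ∀ y, HasFDerivAt f (fderiv ℝ f y) y :=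
    fun y => (hf.differentiable (by simp) y).hasFDerivAt
  have hGy : ∀ y, HasFDerivAt G (Real.exp (2 * A y) • ((2:ℝ) • fderiv ℝ A y)) y :=
    fun y => ((hAy y).const_mul (2:ℝ)).exp
  have hinv : ∀ y, HasFDerivAt (fun z => (π z)⁻¹) ((-((π y)^2)⁻¹) • fderiv ℝ π y) y :=
    fun y => (hasDerivAt_inv (hπne y)).comp_hasFDerivAt y (hπy y)
  have hpdA : ∀ i y, HasFDerivAt (pd A i) (fderiv ℝ (pd A i) y) y :=
    fun i y => ((contDiff_pd hA i).differentiable (by simp) y).hasFDerivAt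
  have hpdπ : ∀ i y, HasFDerivAt (pd π i) (fderiv ℝ (pd π i) y) y :=
    fun i y => ((contDiff_pd hπ i).differentiable (by simp) y).hasFDerivAt
  -- the auxiliary functions
  set u : EuclideanSpace ℝ (Fin d) → ℝ := fun z => G z * (π z)⁻¹ * f z with hudef
  set W : Fin d → EuclideanSpace ℝ (Fin d) → ℝ :=
    fun i z => (2 * G z * pd A i z - G z * pd π i z * (π z)⁻¹) * (f z * f z) with hWdef
  have hdiv : ∀ z, G z / π z * f z = u z := by
    intro z; rw [hudef]; rw [div_eq_mul_inv]
  have hu : ∀ y, HasFDerivAt u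
      ((G y * (π y)⁻¹) • fderiv ℝ f y +
        f y • (G y • ((-((π y)^2)⁻¹) • fderiv ℝ π y) +
          (π y)⁻¹ • (Real.exp (2 * A y) • ((2:ℝ) • fderiv ℝ A y)))) y :=
    fun y => ((hGy y).mul (hinv y)).mul (hfy y)
  have hW : ∀ i y, HasFDerivAt (W i)
      (((2 * G y * pd A i y - G y * pd π i y * (π y)⁻¹)) •
          (f y • fderiv ℝ f y + f y • fderiv ℝ f y) +
        (f y * f y) •
          (((2 * G y) • fderiv ℝ (pd A i) y +
              pd A i y • ((2:ℝ) • (Real.exp (2 * A y) • ((2:ℝ) • fderiv ℝ A y)))) -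
            ((G y * pd π i y) • ((-((π y)^2)⁻¹) • fderiv ℝ π y) +
              (π y)⁻¹ • (G y • fderiv ℝ (pd π i) y +
                pd π i y • (Real.exp (2 * A y) • ((2:ℝ) • fderiv ℝ A y)))))) y :=
    fun i y =>
      ((((hGy y).const_mul (2:ℝ)).mul (hpdA i y)).sub
        (((hGy y).mul (hpdπ i y)).mul (hinv y))).mul ((hfy y).mul (hfy y))
  -- per-coordinate key identity
  have hkey : ∀ i y, pd u i y * pd u i y * ((π y)^2 / G y)
      = pd f i y * pd f i y * G y
        + (f y^2 * G y) * (pd (pd π i) i y / π y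
            - 2 * pd A i y * pd π i y / π y - 2 * pd (pd A i) i y)
        + pd (W i) i y := by
    intro i y
    rw [pd_eq_of_hasFDerivAt (hu y) i, pd_eq_of_hasFDerivAt (hW i y) i]
    simp only [ContinuousLinearMap.add_apply, ContinuousLinearMap.sub_apply,
      ContinuousLinearMap.smul_apply, smul_eq_mul, pd, hGdef]
    generalize (fderiv ℝ A y) (EuclideanSpace.single i 1) = a
    generalize (fderiv ℝ π y) (EuclideanSpace.single i 1) = p
    generalize (fderiv ℝ f y) (EuclideanSpace.single i 1) = f'
    generalize (fderiv ℝ (pd A i) y) (EuclideanSpace.single i 1) = a2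
    generalize (fderiv ℝ (pd π i) y) (EuclideanSpace.single i 1) = p2
    generalize hF : f y = F
    have hPne := hπne y
    generalize hP : π y = P at hPne ⊢
    have hEne : Real.exp (2 * A y) ≠ 0 := Real.exp_ne_zero _
    generalize hE : Real.exp (2 * A y) = Eg at hEne ⊢
    field_simp [hPne, hEne]
    ring
  -- κt sum conversion
  have hκ2 : ∀ y, ∑ i, (f y^2 * G y) * (pd (pd π i) i y / π y
      - 2 * pd A i y * pd π i y / π y - 2 * pd (pd A i) i y)
      = 2 * (κt y * f y^2 * G y) := by
    intro y
    rw [← Finset.mul_sum]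
    have inner : ∑ i, (pd (pd π i) i y / π y
        - 2 * pd A i y * pd π i y / π y - 2 * pd (pd A i) i y)
        = lap π y / π y - 2 * gdot A π y / π y - 2 * lap A y := by
      simp only [lap, gdot]
      rw [Finset.sum_sub_distrib, Finset.sum_sub_distrib]
      congr 1
      · congr 1
        · exact (Finset.sum_div _ _ _).symm
        · rw [mul_div_assoc, Finset.sum_div, Finset.mul_sum]
          exact Finset.sum_congr rfl fun i _ => by ring
      · exact (Finset.mul_sum _ _ _).symm
    rw [inner, hκt y]
    ring
  have hptwise : ∀ y,
      gdot (fun z => G z / π z * f z) (fun z => G z / π z * f z) y * ((π y)^2 / G y)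
      = gdot f f y * G y + (2 * (κt y * f y^2 * G y) + ∑ i, pd (W i) i y) := by
    intro y
    have h0 : gdot (fun z => G z / π z * f z) (fun z => G z / π z * f z) y
        = gdot u u y := by
      simp only [gdot]
      exact Finset.sum_congr rfl fun i _ => by rw [pd_congr hdiv i y]
    rw [h0]
    have h1 : gdot u u y * ((π y)^2 / G y)
        = ∑ i, pd u i y * pd u i y * ((π y)^2 / G y) := by
      simp only [gdot, Finset.sum_mul]
    rw [h1]
    rw [Finset.sum_congr rfl fun i _ => hkey i y]
    rw [Finset.sum_add_distrib, Finset.sum_add_distrib, hκ2 y]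
    rw [add_assoc]
    congr 1
    simp only [gdot, Finset.sum_mul]
  -- smoothness and support facts
  have hWs : ∀ i, ContDiff ℝ (⊤ : ℕ∞) (W i) := fun i =>
    (((contDiff_const.mul hGs).mul (contDiff_pd hA i)).sub
      ((hGs.mul (contDiff_pd hπ i)).mul (hπ.inv hπne))).mul (hf.mul hf)
  have hWc : ∀ i, HasCompactSupport (W i) := by
    intro i
    refine hfc.mono fun z hz => ?_
    rw [Function.mem_support] at hz ⊢
    intro h0
    exact hz (by simp [hWdef, h0])
  have hJ1c : Continuous fun y => gdot f f y * G y := by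
    have hgff : Continuous fun y => gdot f f y := by
      unfold gdot
      exact continuous_finset_sum _ fun i _ =>
        ((contDiff_pd hf i).continuous.mul ((contDiff_pd hf i).continuous))
    exact hgff.mul hGs.continuous
  have hJ1supp : HasCompactSupport fun y => gdot f f y * G y := by
    refine hfc.mono' fun z hz => ?_
    by_contra h
    rw [Function.mem_support] at hz
    exact hz (by simp [gdot, pd_eq_zero_of_nmem_tsupport h])
  have hint1 : Integrable (fun y => gdot f f y * G y) :=
    hJ1c.integrable_of_hasCompactSupport hJ1supp
  have hlapπ : Continuous (lap π) := by
    unfold lap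
    exact continuous_finset_sum _ fun i _ => (contDiff_pd (contDiff_pd hπ i) i).continuous
  have hlapA : Continuous (lap A) := by
    unfold lap
    exact continuous_finset_sum _ fun i _ => (contDiff_pd (contDiff_pd hA i) i).continuous
  have hgdotAπ : Continuous (gdot A π) := by
    unfold gdot
    exact continuous_finset_sum _ fun i _ =>
      ((contDiff_pd hA i).continuous.mul ((contDiff_pd hπ i).continuous))
  have hκc : Continuous κt := by
    have hc : Continuous fun y =>
        (1/2 : ℝ) * (lap π y / π y - 2 * gdot A π y / π y - 2 * lap A y) := by
      refine continuous_const.mul (Continuous.sub (Continuous.sub ?_ ?_) ?_)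
      · exact hlapπ.div hπ.continuous hπne
      · exact (continuous_const.mul hgdotAπ).div hπ.continuous hπne
      · exact continuous_const.mul hlapA
    exact hc.congr fun y => (hκt y).symm
  have hJ2c : Continuous fun y => κt y * f y^2 * G y :=
    (hκc.mul (hf.continuous.pow 2)).mul hGs.continuous
  have hJ2supp : HasCompactSupport fun y => κt y * f y^2 * G y := by
    refine hfc.mono fun z hz => ?_
    rw [Function.mem_support] at hz ⊢
    intro h0
    exact hz (by simp [h0])
  have hint2 : Integrable (fun y => κt y * f y^2 * G y) :=
    hJ2c.integrable_of_hasCompactSupport hJ2supp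
  have hint3 : ∀ i, Integrable (fun y => pd (W i) i y) := fun i =>
    ((contDiff_pd (hWs i) i).continuous).integrable_of_hasCompactSupport
      (hasCompactSupport_pd (hWc i) i)
  have hI : ∫ y, gdot (fun z => G z / π z * f z) (fun z => G z / π z * f z) y
        * ((π y)^2 / G y)
      = (∫ y, gdot f f y * G y) + 2 * ∫ y, κt y * f y^2 * G y := by
    rw [show (fun y => gdot (fun z => G z / π z * f z) (fun z => G z / π z * f z) y
          * ((π y)^2 / G y))
        = fun y => gdot f f y * G y + (2 * (κt y * f y^2 * G y) + ∑ i, pd (W i) i y)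
      from funext fun y => hptwise y]
    have hintS : Integrable (fun y => ∑ i, pd (W i) i y) :=
      integrable_finset_sum _ fun i _ => hint3 i
    have hint2' : Integrable (fun y => 2 * (κt y * f y^2 * G y)) := hint2.const_mul 2
    have hint4 : Integrable (fun y => 2 * (κt y * f y^2 * G y) + ∑ i, pd (W i) i y) :=
      hint2'.add hintS
    rw [integral_add hint1 hint4]
    rw [integral_add hint2' hintS]
    rw [integral_finset_sum _ fun i _ => hint3 i]
    rw [Finset.sum_eq_zero fun i _ => integral_pd_eq_zero (hWs i) (hWc i) i]
    rw [integral_const_mul]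
    ring
  rw [hI]
  ring
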